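/- arXiv:math/0307268 — 6 statements merged into one kernel-verified Lean document; each statement's English description precedes it below -/
import Mathlib

section
/- Let A be a finite abelian group and φ : A → A an automorphism whose order is relatively prime to |A|. Then every element z ∈ A can be written z = φ(z₁)·z₁⁻¹·z₂ with z₁, z₂ ∈ A and φ(z₂) = z₂. Equivalently, A is the product of the image of the map x ↦ φ(x)x⁻¹ with the subgroup of φ-fixed points. -/
/-- If `φ` is an automorphism of a finite abelian group `A` whose order is coprime to
`|A|`, then every `z ∈ A` can be written `z = φ(z₁) z₁⁻¹ z₂` with `φ(z₂) = z₂`. -/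
theorem stmt5 (A : Type) [CommGroup A] [Fintype A] (φ : MulAut A)
    (hco : Nat.Coprime (orderOf φ) (Fintype.card A)) (z : A) :
    ∃ z₁ z₂ : A, φ z₂ = z₂ ∧ z = φ z₁ * z₁⁻¹ * z₂ := by
  set c := Fintype.card A with hc
  haveI : Nonempty A := ⟨1⟩
  rcases eq_or_lt_of_le (Nat.one_le_iff_ne_zero.mpr (Fintype.card_ne_zero (α := A))) with h1 | h1
  · -- trivial group
    haveI : Subsingleton A := Fintype.card_le_one_iff_subsingleton.mp (le_of_eq h1.symm)
    exact ⟨1, 1, Subsingleton.elim _ _, Subsingleton.elim _ _⟩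
  set n := orderOf φ with hn
  obtain ⟨m, -, hm⟩ := Nat.exists_mul_mod_eq_one_of_coprime hco h1
  -- the homomorphism x ↦ φ x * x⁻¹
  let ψ : A →* A :=
    { toFun := fun x => φ x * x⁻¹
      map_one' := by simp
      map_mul' := fun x y => by
        simp [map_mul, mul_inv_rev, mul_comm, mul_assoc, mul_left_comm] }
  have key : ∀ i : ℕ, (φ ^ i) z * z⁻¹ ∈ ψ.range := by
    intro i
    induction i with
    | zero => exact ⟨1, by simp⟩
    | succ i ih =>
      have : (φ ^ (i + 1)) z * z⁻¹ = ψ ((φ ^ i) z) * ((φ ^ i) z * z⁻¹) := by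
        show (φ ^ (i + 1)) z * z⁻¹ = (φ ((φ ^ i) z) * ((φ ^ i) z)⁻¹) * ((φ ^ i) z * z⁻¹)
        rw [pow_succ']
        show φ ((φ ^ i) z) * z⁻¹ = _
        simp [mul_assoc]
      rw [this]
      exact mul_mem ⟨_, rfl⟩ ih
  set N := ∏ i ∈ Finset.range n, (φ ^ i) z with hN
  have hfix : φ N = N := by
    have h2 : φ N = ∏ i ∈ Finset.range n, (φ ^ (i + 1)) z := by
      rw [hN, map_prod]
      refine Finset.prod_congr rfl fun i _ => ?_
      rw [pow_succ']
      rfl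
    have h3 : ∏ i ∈ Finset.range (n + 1), (φ ^ i) z
        = ∏ i ∈ Finset.range (n + 1), (φ ^ i) z := rfl
    have h4 := Finset.prod_range_succ (fun i => (φ ^ i) z) n
    have h5 := Finset.prod_range_succ' (fun i => (φ ^ i) z) n
    have hnz : (φ ^ n) z = z := by rw [hn, pow_orderOf_eq_one]; rfl
    have hz0 : (φ ^ 0) z = z := rfl
    rw [h2]
    have h6 := h5.symm.trans h4
    rw [hnz, hz0] at h6
    exact mul_right_cancel h6
  have hu : N * (z ^ n)⁻¹ ∈ ψ.range := by
    have : N * (z ^ n)⁻¹ = ∏ i ∈ Finset.range n, ((φ ^ i) z * z⁻¹) := by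
      rw [Finset.prod_mul_distrib, hN]
      simp [Finset.prod_const, inv_pow]
    rw [this]
    exact prod_mem fun i _ => key i
  obtain ⟨z₁, hz₁⟩ : ((N * (z ^ n)⁻¹)⁻¹) ^ m ∈ ψ.range :=
    pow_mem (inv_mem hu) m
  refine ⟨z₁, N ^ m, by rw [map_pow, hfix], ?_⟩
  have hzc : z ^ c = 1 := by rw [hc]; exact pow_card_eq_one
  have hz : z ^ (n * m) = z := by
    rw [pow_eq_pow_mod (n * m) hzc, hm, pow_one]
  calc z = z ^ (n * m) := hz.symm
    _ = (z ^ n) ^ m := by rw [pow_mul]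
    _ = N ^ m * ((N * (z ^ n)⁻¹)⁻¹) ^ m := by
        rw [← mul_pow]; congr 1
        rw [mul_inv_rev, inv_inv, mul_comm (z ^ n) N⁻¹, ← mul_assoc,
          mul_inv_cancel, one_mul]
    _ = φ z₁ * z₁⁻¹ * N ^ m := by rw [← hz₁]; exact mul_comm _ _
end

section
/- Fix ρ, s ∈ ℕ, n, d ∈ ℤ, and set n_{ρ,s,d} = ρd²/4 - sd/2 if d is even and n_{ρ,s,d} = ρ(d-1)(d+1)/4 - s(d-1)/2 if d is odd. Then the map (c₁,...,c_m; c'₁,...,c'_{m'}) ↦ (c₁, c₂+ρ, ..., c_m+(m-1)ρ; c'₁+s, c'₂+s+ρ, ..., c'_{m'}+s+(m'-1)ρ) is a bijection from ^0X̃^0_{n-n_{ρ,s,d},d} onto ^ρX̃^s_{n,d}. -/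
namespace Stmt8Aux

lemma sum_mapIdx (ρ : ℕ) : ∀ (l : List ℕ) (t : ℕ),
    (l.mapIdx (fun i c => c + t + i * ρ)).sum
      = l.sum + l.length * t + (∑ i ∈ Finset.range l.length, i) * ρ
  | [], t => by simp
  | a :: l, t => by
    rw [List.mapIdx_cons]
    have h : (fun i (c : ℕ) => c + t + (i + 1) * ρ)
        = (fun (i : ℕ) (c : ℕ) => c + (t + ρ) + i * ρ) := by
      funext i c; ring
    simp only [List.sum_cons, h, sum_mapIdx ρ l (t + ρ), List.length_cons,
      Finset.sum_range_succ]
    ring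

lemma chain_mapIdx (ρ t : ℕ) (l : List ℕ) :
    List.Chain' (fun x y => x + ρ ≤ y) (l.mapIdx (fun i c => c + t + i * ρ))
      ↔ List.Chain' (fun x y : ℕ => x ≤ y) l := by
  rw [List.Chain', List.Chain', List.isChain_iff_getElem, List.isChain_iff_getElem]
  simp only [List.get_eq_getElem, List.getElem_mapIdx, List.length_mapIdx]
  have e : ∀ i : ℕ, (i + 1) * ρ = i * ρ + ρ := fun i => by ring
  constructor
  · intro H i hi
    have h := H i hi
    rw [e i] at h
    omega
  · intro H i hi
    have h := H i hi
    rw [e i]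
    omega

lemma le_getElem (ρ : ℕ) : ∀ (l : List ℕ) (t : ℕ),
    List.Chain' (fun x y => x + ρ ≤ y) l →
    (∀ h0 : 0 < l.length, t ≤ l[0]) → ∀ i (h : i < l.length), t + i * ρ ≤ l[i]
  | [], t => by intro _ _ i hi; simp at hi
  | [a], t => by
    intro _ h0 i hi
    simp only [List.length_singleton, Nat.lt_one_iff] at hi
    subst hi
    simpa using h0 (by simp)
  | a :: b :: l, t => by
    intro hc h0 i hi
    match i with
    | 0 =>
      have ha : t ≤ a := by exact h0 (by simp)
      simpa using ha
    | (i + 1) =>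
      have hab : a + ρ ≤ b := (List.isChain_cons_cons.mp hc).1
      have ha : t ≤ a := by exact h0 (by simp)
      have h := le_getElem ρ (b :: l) (t + ρ) (List.isChain_cons_cons.mp hc).2
        (by intro _; simpa using by omega) i (by simpa using hi)
      simp only [List.getElem_cons_succ]
      have e : (i + 1) * ρ = i * ρ + ρ := by ring
      rw [e]
      omega

lemma gauss (m : ℕ) : (∑ x ∈ Finset.range m, (x : ℚ)) = m * (m - 1) / 2 := by
  induction m with
  | zero => simp
  | succ m ih =>
    rw [Finset.sum_range_succ, ih]
    push_cast
    ring

lemma mapIdx_inj (f : ℕ → ℕ → ℕ) (hf : ∀ i, Function.Injective (f i)) :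
    Function.Injective (fun l : List ℕ => l.mapIdx f) := by
  intro l l' h
  simp only at h
  have hl : l.length = l'.length := by
    simpa [List.length_mapIdx] using congrArg List.length h
  apply List.ext_getElem hl
  intro i h1 h2
  have h3 := List.getElem_of_eq h (i := i) (by simpa [List.length_mapIdx] using h1)
  rw [List.getElem_mapIdx, List.getElem_mapIdx] at h3
  exact hf i h3

end Stmt8Aux

open Stmt8Aux

/-- Membership in the set `^ρX̃^s_{n,d}` of symbols (Lusztig 13.2). -/
def MemSymbol (ρ s : ℕ) (n : ℚ) (d : ℤ) (A B : List ℕ) : Prop :=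
  List.Chain' (fun x y => x + ρ ≤ y) A ∧
  List.Chain' (fun x y => x + ρ ≤ y) B ∧
  (∀ b ∈ B, s ≤ b) ∧
  (A.length : ℤ) - (B.length : ℤ) = d ∧
  (if Even d then
      (A.sum : ℚ) + (B.sum : ℚ) =
        n + (ρ : ℚ) * ((A.length : ℚ) + (B.length : ℚ))
              * ((A.length : ℚ) + (B.length : ℚ) - 2) / 4
          + (s : ℚ) * ((A.length : ℚ) + (B.length : ℚ)) / 2
    else
      (A.sum : ℚ) + (B.sum : ℚ) =
        n + (ρ : ℚ) * ((A.length : ℚ) + (B.length : ℚ) - 1) ^ 2 / 4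
          + (s : ℚ) * ((A.length : ℚ) + (B.length : ℚ) - 1) / 2)

/-- The shift constant `n_{ρ,s,d}` of Lusztig 13.2. -/
noncomputable def nConst (ρ s : ℕ) (d : ℤ) : ℚ :=
  if Even d then (ρ : ℚ) * (d : ℚ) ^ 2 / 4 - (s : ℚ) * (d : ℚ) / 2
  else (ρ : ℚ) * ((d : ℚ) - 1) * ((d : ℚ) + 1) / 4 - (s : ℚ) * ((d : ℚ) - 1) / 2

lemma mem_iff (ρ s : ℕ) (n : ℚ) (d : ℤ) (A B : List ℕ) :
    MemSymbol 0 0 (n - nConst ρ s d) d A B ↔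
    MemSymbol ρ s n d (A.mapIdx fun i c => c + i * ρ) (B.mapIdx fun i c => c + s + i * ρ) := by
  have hA : (A.mapIdx fun i c => c + i * ρ) = A.mapIdx fun i c => c + 0 + i * ρ := by
    congr 1
  unfold MemSymbol
  rw [hA, chain_mapIdx ρ 0 A, chain_mapIdx ρ s B]
  simp only [add_zero, List.length_mapIdx, Nat.cast_zero, zero_add,
    zero_mul, zero_div]
  have hmemR : ∀ b ∈ B.mapIdx (fun i c => c + s + i * ρ), s ≤ b := by
    intro b hb
    rw [List.mem_iff_getElem] at hb
    obtain ⟨i, hi, rfl⟩ := hb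
    rw [List.getElem_mapIdx]
    omega
  constructor
  · rintro ⟨h1, h2, _, h4, h5⟩
    refine ⟨h1, h2, hmemR, h4, ?_⟩
    rw [hA, sum_mapIdx ρ A 0, sum_mapIdx ρ B s]
    have hd : (d : ℚ) = (A.length : ℚ) - (B.length : ℚ) := by
      have := congrArg (fun z : ℤ => (z : ℚ)) h4
      push_cast at this ⊢
      linarith
    unfold nConst at h5
    by_cases hE : Even d
    · simp only [if_pos hE] at h5 ⊢
      rw [hd] at h5
      push_cast at h5 ⊢
      rw [gauss, gauss]
      linear_combination h5
    · simp only [if_neg hE] at h5 ⊢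
      rw [hd] at h5
      push_cast at h5 ⊢
      rw [gauss, gauss]
      linear_combination h5
  · rintro ⟨h1, h2, _, h4, h5⟩
    refine ⟨h1, h2, fun b _ => Nat.zero_le b, h4, ?_⟩
    rw [hA, sum_mapIdx ρ A 0, sum_mapIdx ρ B s] at h5
    have hd : (d : ℚ) = (A.length : ℚ) - (B.length : ℚ) := by
      have := congrArg (fun z : ℤ => (z : ℚ)) h4
      push_cast at this ⊢
      linarith
    unfold nConst
    by_cases hE : Even d
    · simp only [if_pos hE] at h5 ⊢
      rw [hd]
      push_cast at h5 ⊢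
      rw [gauss, gauss] at h5
      linear_combination h5
    · simp only [if_neg hE] at h5 ⊢
      rw [hd]
      push_cast at h5 ⊢
      rw [gauss, gauss] at h5
      linear_combination h5

/-- The map `(c_i; c'_i) ↦ (c_i + (i-1)ρ; c'_i + s + (i-1)ρ)` is a bijection from
`^0X̃^0_{n - n_{ρ,s,d}, d}` onto `^ρX̃^s_{n,d}`. -/
theorem stmt8 (ρ s : ℕ) (n : ℚ) (d : ℤ) :
    Set.BijOn
      (fun p : List ℕ × List ℕ =>
        (p.1.mapIdx (fun i c => c + i * ρ), p.2.mapIdx (fun i c => c + s + i * ρ)))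
      {p : List ℕ × List ℕ | MemSymbol 0 0 (n - nConst ρ s d) d p.1 p.2}
      {p : List ℕ × List ℕ | MemSymbol ρ s n d p.1 p.2} := by
  refine ⟨?_, ?_, ?_⟩
  · intro p hp
    exact (mem_iff ρ s n d p.1 p.2).mp hp
  · intro p _ q _ h
    simp only [Prod.mk.injEq] at h
    have h1 := mapIdx_inj (fun i c => c + i * ρ) (fun i x y hxy => by simpa using hxy) h.1
    have h2 := mapIdx_inj (fun i c => c + s + i * ρ) (fun i x y hxy => by simpa using hxy) h.2
    exact Prod.ext h1 h2
  · intro q hq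
    simp only [Set.mem_setOf_eq] at hq
    obtain ⟨h1, h2, h3, h4, h5⟩ := hq
    set A₀ := q.1.mapIdx (fun i c => c - i * ρ) with hA₀
    set B₀ := q.2.mapIdx (fun i c => c - s - i * ρ) with hB₀
    have hAle : ∀ i, ∀ _ : i < q.1.length, i * ρ ≤ q.1[i] := by
      intro i hi
      have := le_getElem ρ q.1 0 h1 (fun _ => Nat.zero_le _) i hi
      omega
    have hBle : ∀ i, ∀ _ : i < q.2.length, s + i * ρ ≤ q.2[i] := by
      intro i hi
      exact le_getElem ρ q.2 s h2 (fun h0 => h3 _ (List.getElem_mem h0)) i hi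
    have hAeq : (A₀.mapIdx fun i c => c + i * ρ) = q.1 := by
      apply List.ext_getElem (by simp [hA₀, List.length_mapIdx])
      intro i hh1 hh2
      simp only [hA₀, List.getElem_mapIdx]
      have := hAle i hh2
      omega
    have hBeq : (B₀.mapIdx fun i c => c + s + i * ρ) = q.2 := by
      apply List.ext_getElem (by simp [hB₀, List.length_mapIdx])
      intro i hh1 hh2
      simp only [hB₀, List.getElem_mapIdx]
      have := hBle i hh2
      omega
    refine ⟨(A₀, B₀), ?_, ?_⟩
    · show MemSymbol 0 0 (n - nConst ρ s d) d A₀ B₀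
      rw [mem_iff ρ s n d A₀ B₀, hAeq, hBeq]
      exact ⟨h1, h2, h3, h4, h5⟩
    · exact Prod.ext hAeq hBeq
end

section
/- Let λ = (λ₁ ≤ ... ≤ λ_m) ∈ X_n (every even part with even multiplicity, every odd part with multiplicity ≤ 1). With d and t_i as in 14.2, form the modified entries: an entry λ_i ≡ 1 (mod 4) becomes (λ_i-1)/4 − t_i with mark a; an entry λ_i ≡ 3 (mod 4) becomes (λ_i-3)/4 + t_i with mark b; a maximal group λ_i = ... = λ_{i+2p-1} = e of 2p equal entries with e ≡ 0 (mod 4) becomes the alternating list e/4 − t_i (mark a), e/4 + t_i (mark b), repeated p times; and a maximal group of 2p equal entries with e ≡ 2 (mod 4) becomes (e+2)/4 − t_i (mark a), (e-2)/4 + t_i (mark b), repeated p times. Then the modified entries carrying mark a, read in order, form a nondecreasing sequence of natural numbers (in particular all are ≥ 0). -/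
/-- `d(s) = 0` for `s` even and `(-1)^((s-1)/2)` for `s` odd (Lusztig 14.2). -/
def lusztigD (s : ℕ) : ℤ := if Even s then 0 else (-1) ^ ((s - 1) / 2)

/-- `tᵢ = Σ_{j<i} d(λⱼ)` (Lusztig 14.2). -/
def tPartial (m : ℕ) (lam : Fin m → ℕ) (i : Fin m) : ℤ :=
  ∑ j ∈ Finset.univ.filter (fun j => j < i), lusztigD (lam j)

/-- The offset of index `i` within its group of equal entries: the number of earlier
indices with the same value of `λ`. -/
def offsetIn (m : ℕ) (lam : Fin m → ℕ) (i : Fin m) : ℕ :=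
  (Finset.univ.filter (fun j => j < i ∧ lam j = lam i)).card

/-- Index `i` carries mark `a`: either `λᵢ ≡ 1 (mod 4)`, or `λᵢ` is even and `i` sits
at an even offset within its group of equal (even) entries. -/
def markA (m : ℕ) (lam : Fin m → ℕ) (i : Fin m) : Prop :=
  lam i % 4 = 1 ∨ (lam i % 2 = 0 ∧ Even (offsetIn m lam i))

/-- Index `i` carries mark `b`: either `λᵢ ≡ 3 (mod 4)`, or `λᵢ` is even and `i` sits
at an odd offset within its group of equal (even) entries. -/
def markB (m : ℕ) (lam : Fin m → ℕ) (i : Fin m) : Prop :=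
  lam i % 4 = 3 ∨ (lam i % 2 = 0 ∧ ¬ Even (offsetIn m lam i))

/-- The modified entry at index `i` (Lusztig 14.2): `(λᵢ-1)/4 - tᵢ` if `λᵢ ≡ 1 (4)`;
`(λᵢ-3)/4 + tᵢ` if `λᵢ ≡ 3 (4)`; for a group of equal entries `e ≡ 0 (4)` the
alternating values `e/4 - tᵢ`, `e/4 + tᵢ`; and for `e ≡ 2 (4)` the alternating values
`(e+2)/4 - tᵢ`, `(e-2)/4 + tᵢ`. (Note that `tⱼ` is constant along a group of equal
even entries, since `d` vanishes on even numbers.) -/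
def modVal (m : ℕ) (lam : Fin m → ℕ) (i : Fin m) : ℤ :=
  if lam i % 4 = 1 then ((lam i : ℤ) - 1) / 4 - tPartial m lam i
  else if lam i % 4 = 3 then ((lam i : ℤ) - 3) / 4 + tPartial m lam i
  else if lam i % 4 = 0 then
    (if Even (offsetIn m lam i) then (lam i : ℤ) / 4 - tPartial m lam i
     else (lam i : ℤ) / 4 + tPartial m lam i)
  else
    (if Even (offsetIn m lam i) then ((lam i : ℤ) + 2) / 4 - tPartial m lam i
     else ((lam i : ℤ) - 2) / 4 + tPartial m lam i)

/-- `F λ = ⌊(λ+2)/4⌋`, the "unmodified part" of an `a`-marked modified entry. -/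
def lusztigF (x : ℕ) : ℕ := (x + 2) / 4

lemma lusztigF_mono {a b : ℕ} (h : a ≤ b) : lusztigF a ≤ lusztigF b :=
  Nat.div_le_div_right (Nat.add_le_add_right h 2)

lemma lusztigD_eq (s : ℕ) :
    lusztigD s = if s % 4 = 1 then 1 else if s % 4 = 3 then -1 else 0 := by
  unfold lusztigD
  by_cases h : Even s
  · have h2 := Nat.even_iff.mp h
    rw [if_pos h, if_neg (by omega), if_neg (by omega)]
  · have h2 := Nat.not_even_iff.mp h
    rw [if_neg h]
    rcases Nat.even_or_odd ((s - 1) / 2) with he | ho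
    · have h4 := Nat.even_iff.mp he
      rw [Even.neg_one_pow he, if_pos (by omega)]
    · have h4 := Nat.odd_iff.mp ho
      rw [Odd.neg_one_pow ho, if_neg (by omega), if_pos (by omega)]

lemma sum_d_le (m : ℕ) (lam : Fin m → ℕ) (S : Finset (Fin m)) :
    ∑ k ∈ S, lusztigD (lam k) ≤ ((S.filter fun k => lam k % 4 = 1).card : ℤ) := by
  rw [← Finset.sum_boole]
  apply Finset.sum_le_sum
  intro k _
  rw [lusztigD_eq]
  split_ifs <;> norm_num

lemma card_le_of_inj (m : ℕ) (lam : Fin m → ℕ) (hmono : Monotone lam)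
    (hodd : ∀ p : ℕ, Odd p → (Finset.univ.filter fun i => lam i = p).card ≤ 1)
    (j : Fin m) (hj3 : lam j % 4 ≠ 3) (c : ℕ) (S : Finset (Fin m))
    (hS : ∀ k ∈ S, k < j ∧ lam k % 4 = 1 ∧ c ≤ lusztigF (lam k)) :
    S.card ≤ lusztigF (lam j) - c := by
  have huniq : ∀ k k' : Fin m, lam k % 2 = 1 → lam k = lam k' → k = k' := by
    intro k k' hk hkk'
    have h1 := hodd (lam k) (Nat.odd_iff.mpr hk)
    exact Finset.card_le_one.mp h1 k (by simp) k' (by simp [hkk'.symm])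
  have hle := Finset.card_le_card_of_injOn (t := Finset.Ico c (lusztigF (lam j)))
      (fun k => lusztigF (lam k))
      (by
        intro k hk
        obtain ⟨hkj, hk1, hck⟩ := hS k hk
        simp only [Finset.mem_coe, Finset.coe_Ico, Set.mem_Ico, Finset.mem_Ico]
        refine ⟨hck, ?_⟩
        have hlamle : lam k ≤ lam j := hmono hkj.le
        have hne : lam j % 4 = 1 → lam k ≠ lam j := by
          intro h41 heq
          exact absurd (huniq k j (by omega) heq) (Fin.ne_of_lt hkj)
        unfold lusztigF
        by_cases h41 : lam j % 4 = 1
        · have := hne h41; omega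
        · omega)
      (by
        intro k hk k' hk' h
        obtain ⟨_, hk1, _⟩ := hS k hk
        obtain ⟨_, hk'1, _⟩ := hS k' hk'
        simp only at h
        have : lam k = lam k' := by unfold lusztigF at h; omega
        exact huniq k k' (by omega) this)
  simpa [Nat.card_Ico] using hle

lemma tPartial_split (m : ℕ) (lam : Fin m → ℕ) (i j : Fin m) (hij : i ≤ j) :
    tPartial m lam j = tPartial m lam i +
      ∑ k ∈ Finset.univ.filter (fun k => i ≤ k ∧ k < j), lusztigD (lam k) := by
  unfold tPartial
  rw [← Finset.sum_union]
  · congr 1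
    ext k
    simp only [Finset.mem_filter, Finset.mem_univ, Finset.mem_union, true_and]
    constructor
    · intro h
      by_cases h' : k < i
      · exact Or.inl h'
      · exact Or.inr ⟨le_of_not_gt h', h⟩
    · rintro (h | ⟨_, h⟩)
      · exact lt_of_lt_of_le h hij
      · exact h
  · rw [Finset.disjoint_left]
    intro k hk hk'
    simp only [Finset.mem_filter, Finset.mem_univ, true_and] at hk hk'
    exact absurd hk (not_lt.mpr hk'.1)

lemma modVal_eq_of_markA (m : ℕ) (lam : Fin m → ℕ) (i : Fin m) (h : markA m lam i) :
    modVal m lam i = (lusztigF (lam i) : ℤ) - tPartial m lam i := by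
  unfold modVal lusztigF
  rcases h with h1 | ⟨h2, he⟩
  · rw [if_pos h1]; omega
  · have hne1 : lam i % 4 ≠ 1 := by omega
    have hne3 : lam i % 4 ≠ 3 := by omega
    rw [if_neg hne1, if_neg hne3]
    by_cases h0 : lam i % 4 = 0
    · rw [if_pos h0, if_pos he]; omega
    · rw [if_neg h0, if_pos he]; omega

/-- Lemma 14.3(a): for `λ ∈ X_n`, the modified entries marked `a`, read in order,
form a nondecreasing sequence of natural numbers. -/
theorem stmt12 (m n : ℕ) (lam : Fin m → ℕ) (hmono : Monotone lam)
    (hpos : ∀ i, 0 < lam i) (hsum : ∑ i, lam i = n)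
    (heven : ∀ p : ℕ, Even p → Even ((Finset.univ.filter fun i => lam i = p).card))
    (hodd : ∀ p : ℕ, Odd p → (Finset.univ.filter fun i => lam i = p).card ≤ 1) :
    (∀ i, markA m lam i → 0 ≤ modVal m lam i) ∧
      (∀ i j, i ≤ j → markA m lam i → markA m lam j →
        modVal m lam i ≤ modVal m lam j) := by
  have hA3 : ∀ i, markA m lam i → lam i % 4 ≠ 3 := by
    rintro i (h | ⟨h, _⟩) <;> omega
  have key0 : ∀ j : Fin m, lam j % 4 ≠ 3 → tPartial m lam j ≤ (lusztigF (lam j) : ℤ) := by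
    intro j hj3
    have h1 := sum_d_le m lam (Finset.univ.filter (fun k => k < j))
    have h2 : ((Finset.univ.filter (fun k => k < j)).filter
        (fun k => lam k % 4 = 1)).card ≤ lusztigF (lam j) - 0 := by
      apply card_le_of_inj m lam hmono hodd j hj3
      intro k hk
      simp only [Finset.mem_filter, Finset.mem_univ, true_and] at hk
      exact ⟨hk.1, hk.2, Nat.zero_le _⟩
    unfold tPartial
    omega
  have key : ∀ i j : Fin m, i ≤ j → lam i % 4 ≠ 3 → lam j % 4 ≠ 3 →
      tPartial m lam j - tPartial m lam i ≤ (lusztigF (lam j) : ℤ) - lusztigF (lam i) := by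
    intro i j hij hi3 hj3
    rw [tPartial_split m lam i j hij]
    have h1 := sum_d_le m lam (Finset.univ.filter (fun k => i ≤ k ∧ k < j))
    have h2 : ((Finset.univ.filter (fun k => i ≤ k ∧ k < j)).filter
        (fun k => lam k % 4 = 1)).card ≤ lusztigF (lam j) - lusztigF (lam i) := by
      apply card_le_of_inj m lam hmono hodd j hj3
      intro k hk
      simp only [Finset.mem_filter, Finset.mem_univ, true_and] at hk
      exact ⟨hk.1.2, hk.2, lusztigF_mono (hmono hk.1.1)⟩
    have hFle : lusztigF (lam i) ≤ lusztigF (lam j) := lusztigF_mono (hmono hij)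
    omega
  constructor
  · intro i hi
    rw [modVal_eq_of_markA m lam i hi]
    have := key0 i (hA3 i hi)
    omega
  · intro i j hij hi hj
    rw [modVal_eq_of_markA m lam i hi, modVal_eq_of_markA m lam j hj]
    have := key i j hij (hA3 i hi) (hA3 j hj)
    omega
end

section
/- With λ ∈ X_n and the marked modification procedure of 14.2 (entries ≡ 1 mod 4 become (λ_i-1)/4 − t_i marked a; entries ≡ 3 mod 4 become (λ_i-3)/4 + t_i marked b; groups of 2p equal even entries e become p copies of the alternating pair ((e+2δ)/4 − t_i marked a, (e-2δ)/4 + t_i marked b) where δ = 0 if e ≡ 0 mod 4 and δ = 1 if e ≡ 2 mod 4), the modified entries carrying mark b, read in order, form a nondecreasing sequence of natural numbers (in particular all are ≥ 0). -/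
lemma count3_range (x : ℕ) :
    ((Finset.range x).filter (fun v => v % 4 = 3)).card = x / 4 := by
  induction x with
  | zero => simp
  | succ x ih =>
    rw [Finset.range_add_one, Finset.filter_insert]
    by_cases h : x % 4 = 3
    · rw [if_pos h, Finset.card_insert_of_notMem (by simp)]
      omega
    · rw [if_neg h]; omega

lemma count3_Ico (a b : ℕ) (hab : a ≤ b) :
    ((Finset.Ico a b).filter (fun v => v % 4 = 3)).card = b / 4 - a / 4 := by
  have hsplit : Finset.range a ∪ Finset.Ico a b = Finset.range b := by
    rw [Finset.range_eq_Ico, Finset.range_eq_Ico]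
    exact Finset.Ico_union_Ico_eq_Ico (Nat.zero_le a) hab
  have hdisj : Disjoint ((Finset.range a).filter (fun v => v % 4 = 3))
      ((Finset.Ico a b).filter (fun v => v % 4 = 3)) := by
    apply Finset.disjoint_filter_filter
    simp only [Finset.disjoint_left, Finset.mem_range, Finset.mem_Ico]
    omega
  have := Finset.card_union_of_disjoint hdisj
  rw [← Finset.filter_union, hsplit, count3_range, count3_range] at this
  omega

lemma lam_inj_odd (m : ℕ) (lam : Fin m → ℕ)
    (hodd : ∀ p : ℕ, Odd p → (Finset.univ.filter fun i => lam i = p).card ≤ 1)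
    (k₁ k₂ : Fin m) (heq : lam k₁ = lam k₂) (hparity : lam k₂ % 2 = 1) : k₁ = k₂ := by
  by_contra hne
  have hsub : ({k₁, k₂} : Finset (Fin m)) ⊆ Finset.univ.filter (fun i => lam i = lam k₂) := by
    intro x hx
    simp only [Finset.mem_insert, Finset.mem_singleton] at hx
    rcases hx with rfl | rfl <;> simp [heq]
  have h2 : ({k₁, k₂} : Finset (Fin m)).card = 2 := Finset.card_pair hne
  have := Finset.card_le_card hsub
  have := hodd (lam k₂) (Nat.odd_iff.mpr hparity)
  omega

lemma key (m : ℕ) (lam : Fin m → ℕ) (hmono : Monotone lam)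
    (hodd : ∀ p : ℕ, Odd p → (Finset.univ.filter fun i => lam i = p).card ≤ 1)
    (j : Fin m) (hj : lam j % 4 = 3 ∨ lam j % 2 = 0)
    (lo : ℕ) (S : Finset (Fin m)) (hS : ∀ k ∈ S, k < j ∧ lo ≤ lam k) :
    -(((Finset.Ico lo (lam j)).filter (fun v => v % 4 = 3)).card : ℤ)
      ≤ ∑ k ∈ S, lusztigD (lam k) := by
  have h1 : ∑ k ∈ S, (if lam k % 4 = 3 then (-1:ℤ) else 0) ≤ ∑ k ∈ S, lusztigD (lam k) := by
    apply Finset.sum_le_sum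
    intro k _
    rw [lusztigD_eq]
    split_ifs <;> omega
  have h2 : ∑ k ∈ S, (if lam k % 4 = 3 then (-1:ℤ) else 0)
      = -((S.filter (fun k => lam k % 4 = 3)).card : ℤ) := by
    rw [← Finset.sum_filter, Finset.sum_const]
    simp
  have h3 : (S.filter (fun k => lam k % 4 = 3)).card
      ≤ ((Finset.Ico lo (lam j)).filter (fun v => v % 4 = 3)).card := by
    apply Finset.card_le_card_of_injOn lam
    · intro k hk
      simp only [Finset.mem_coe, Finset.mem_filter] at hk ⊢
      obtain ⟨hkS, hk3⟩ := hk
      obtain ⟨hkj, hklo⟩ := hS k hkS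
      have hle : lam k ≤ lam j := hmono hkj.le
      have hne : lam k ≠ lam j := by
        intro heq
        rcases hj with hj | hj
        · exact absurd (lam_inj_odd m lam hodd k j heq (by omega)) hkj.ne
        · omega
      exact ⟨Finset.mem_Ico.mpr ⟨hklo, lt_of_le_of_ne hle hne⟩, hk3⟩
    · intro k₁ hk₁ k₂ hk₂ heq
      simp only [Finset.coe_filter, Set.mem_setOf_eq] at hk₂
      exact lam_inj_odd m lam hodd k₁ k₂ heq (by omega)
  omega

lemma modVal_b (m : ℕ) (lam : Fin m → ℕ) (i : Fin m) (hb : markB m lam i) :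
    modVal m lam i = ((lam i / 4 : ℕ) : ℤ) + tPartial m lam i := by
  unfold modVal
  rcases hb with h3 | ⟨he, ho⟩
  · rw [if_neg (by omega), if_pos h3]
    have h4 : ((lam i : ℤ) - 3) = 4 * ((lam i / 4 : ℕ) : ℤ) := by push_cast; omega
    rw [h4, Int.mul_ediv_cancel_left _ (by norm_num)]
  · have h4 : lam i % 4 = 0 ∨ lam i % 4 = 2 := by omega
    rcases h4 with h4 | h4
    · rw [if_neg (by omega), if_neg (by omega), if_pos h4, if_neg ho]
      have h5 : (lam i : ℤ) = 4 * ((lam i / 4 : ℕ) : ℤ) := by push_cast; omega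
      rw [h5, Int.mul_ediv_cancel_left _ (by norm_num)]
    · rw [if_neg (by omega), if_neg (by omega), if_neg (by omega), if_neg ho]
      have h5 : ((lam i : ℤ) - 2) = 4 * ((lam i / 4 : ℕ) : ℤ) := by push_cast; omega
      rw [h5, Int.mul_ediv_cancel_left _ (by norm_num)]

/-- Lemma 14.3(b): for `λ ∈ X_n`, the modified entries marked `b`, read in order,
form a nondecreasing sequence of natural numbers. -/
theorem stmt13 (m n : ℕ) (lam : Fin m → ℕ) (hmono : Monotone lam)
    (hpos : ∀ i, 0 < lam i) (hsum : ∑ i, lam i = n)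
    (heven : ∀ p : ℕ, Even p → Even ((Finset.univ.filter fun i => lam i = p).card))
    (hodd : ∀ p : ℕ, Odd p → (Finset.univ.filter fun i => lam i = p).card ≤ 1) :
    (∀ i, markB m lam i → 0 ≤ modVal m lam i) ∧
      (∀ i j, i ≤ j → markB m lam i → markB m lam j →
        modVal m lam i ≤ modVal m lam j) := by

  have hBor : ∀ i, markB m lam i → lam i % 4 = 3 ∨ lam i % 2 = 0 := by
    intro i hb; rcases hb with h | ⟨h, _⟩; exacts [Or.inl h, Or.inr h]
  constructor
  · intro i hb
    rw [modVal_b m lam i hb]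
    have hk := key m lam hmono hodd i (hBor i hb) 0
      (Finset.univ.filter (fun k => k < i)) (by
        intro k hk
        simp only [Finset.mem_filter] at hk
        exact ⟨hk.2, Nat.zero_le _⟩)
    rw [← Finset.range_eq_Ico, count3_range] at hk
    unfold tPartial
    omega
  · intro i j hij hbi hbj
    rw [modVal_b m lam i hbi, modVal_b m lam j hbj]
    have hsub : Finset.univ.filter (fun k => k < i) ⊆ Finset.univ.filter (fun k => k < j) := by
      intro k hk
      simp only [Finset.mem_filter] at hk ⊢
      exact ⟨Finset.mem_univ k, lt_of_lt_of_le hk.2 hij⟩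
    have hsum2 : (∑ k ∈ (Finset.univ.filter (fun k => k < j)) \
          (Finset.univ.filter (fun k => k < i)), lusztigD (lam k))
        + ∑ k ∈ Finset.univ.filter (fun k => k < i), lusztigD (lam k)
        = ∑ k ∈ Finset.univ.filter (fun k => k < j), lusztigD (lam k) :=
      Finset.sum_sdiff hsub
    have hk := key m lam hmono hodd j (hBor j hbj) (lam i)
      ((Finset.univ.filter (fun k => k < j)) \ (Finset.univ.filter (fun k => k < i))) (by
        intro k hk
        simp only [Finset.mem_sdiff, Finset.mem_filter, Finset.mem_univ,
          true_and] at hk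
        exact ⟨hk.1, hmono (le_of_not_gt hk.2)⟩)
    have hle : lam i ≤ lam j := hmono hij
    rw [count3_Ico _ _ hle] at hk
    have hdivle : lam i / 4 ≤ lam j / 4 := Nat.div_le_div_right hle
    unfold tPartial
    omega
end

section
/- Let λ ∈ X_n with modified entries as defined in 14.2. Then the sum S of all modified entries equals (n - 2t² + t)/4, where t = Σ_{i=1}^m d(λ_i). -/
-- helpers

private def cEmb (k : ℕ) : Fin k ↪ Fin (k + 1) := ⟨Fin.castSucc, Fin.castSucc_injective k⟩

lemma filter_ltQ_castSucc {k : ℕ} (i : Fin k) (Q : Fin (k + 1) → Prop) [DecidablePred Q] :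
    (Finset.univ.filter fun j : Fin (k + 1) => j < i.castSucc ∧ Q j) =
    (Finset.univ.filter fun j : Fin k => j < i ∧ Q j.castSucc).map (cEmb k) := by
  ext j
  simp only [Finset.mem_filter, Finset.mem_map, Finset.mem_univ, true_and, cEmb,
    Function.Embedding.coeFn_mk]
  constructor
  · rintro ⟨h1, h2⟩
    have h1' : (j : ℕ) < (i : ℕ) := by rw [Fin.lt_def, Fin.coe_castSucc] at h1; exact h1
    have hj : (j : ℕ) < k := lt_trans h1' i.isLt
    refine ⟨⟨(j : ℕ), hj⟩, ⟨?_, ?_⟩, ?_⟩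
    · exact h1'
    · have h : (⟨(j : ℕ), hj⟩ : Fin k).castSucc = j := by simp [Fin.ext_iff]
      rwa [h]
    · simp [Fin.ext_iff]
  · rintro ⟨a, ⟨ha1, ha2⟩, rfl⟩
    exact ⟨Fin.castSucc_lt_castSucc_iff.mpr ha1, ha2⟩

lemma filter_ltQ_last {k : ℕ} (Q : Fin (k + 1) → Prop) [DecidablePred Q] :
    (Finset.univ.filter fun j : Fin (k + 1) => j < Fin.last k ∧ Q j) =
    (Finset.univ.filter fun j : Fin k => Q j.castSucc).map (cEmb k) := by
  ext j
  simp only [Finset.mem_filter, Finset.mem_map, Finset.mem_univ, true_and, cEmb,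
    Function.Embedding.coeFn_mk]
  constructor
  · rintro ⟨h1, h2⟩
    have hj : (j : ℕ) < k := by rw [Fin.lt_def, Fin.val_last] at h1; exact h1
    refine ⟨⟨(j : ℕ), hj⟩, ?_, ?_⟩
    · have h : (⟨(j : ℕ), hj⟩ : Fin k).castSucc = j := by simp [Fin.ext_iff]
      rwa [h]
    · simp [Fin.ext_iff]
  · rintro ⟨a, ha, rfl⟩
    exact ⟨by rw [Fin.lt_def, Fin.val_last]; exact a.isLt, ha⟩

lemma tPartial_castSucc {k : ℕ} (lam : Fin (k + 1) → ℕ) (i : Fin k) :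
    tPartial (k + 1) lam i.castSucc = tPartial k (fun j => lam j.castSucc) i := by
  unfold tPartial
  have h := filter_ltQ_castSucc i (fun _ => True)
  simp only [and_true] at h
  rw [h, Finset.sum_map]
  rfl

lemma offsetIn_castSucc {k : ℕ} (lam : Fin (k + 1) → ℕ) (i : Fin k) :
    offsetIn (k + 1) lam i.castSucc = offsetIn k (fun j => lam j.castSucc) i := by
  unfold offsetIn
  rw [filter_ltQ_castSucc i (fun j => lam j = lam i.castSucc), Finset.card_map]

lemma modVal_castSucc {k : ℕ} (lam : Fin (k + 1) → ℕ) (i : Fin k) :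
    modVal (k + 1) lam i.castSucc = modVal k (fun j => lam j.castSucc) i := by
  simp only [modVal, tPartial_castSucc, offsetIn_castSucc]

lemma tPartial_last {k : ℕ} (lam : Fin (k + 1) → ℕ) :
    tPartial (k + 1) lam (Fin.last k) = ∑ i : Fin k, lusztigD (lam i.castSucc) := by
  unfold tPartial
  have h := filter_ltQ_last (fun _ : Fin (k + 1) => True)
  simp only [and_true] at h
  rw [h, Finset.sum_map, Finset.filter_true_of_mem (by simp)]
  rfl

lemma offsetIn_last {k : ℕ} (lam : Fin (k + 1) → ℕ) :
    offsetIn (k + 1) lam (Fin.last k) =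
      (Finset.univ.filter fun j : Fin k => lam j.castSucc = lam (Fin.last k)).card := by
  unfold offsetIn
  rw [filter_ltQ_last (fun j => lam j = lam (Fin.last k)), Finset.card_map]

lemma card_fiber_castSucc {k : ℕ} (lam : Fin (k + 1) → ℕ) (p : ℕ) :
    (Finset.univ.filter fun i : Fin (k + 1) => lam i = p).card =
      (Finset.univ.filter fun i : Fin k => lam i.castSucc = p).card +
        (if lam (Fin.last k) = p then 1 else 0) := by
  rw [Finset.card_filter, Finset.card_filter, Fin.sum_univ_castSucc]

lemma lusztigD_even {s : ℕ} (h : s % 2 = 0) : lusztigD s = 0 := by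
  unfold lusztigD
  rw [if_pos (Nat.even_iff.mpr h)]

lemma lusztigD_one {s : ℕ} (h : s % 4 = 1) : lusztigD s = 1 := by
  unfold lusztigD
  rw [if_neg (by rw [Nat.even_iff]; omega)]
  exact Even.neg_one_pow (by rw [Nat.even_iff]; omega)

lemma lusztigD_three {s : ℕ} (h : s % 4 = 3) : lusztigD s = -1 := by
  unfold lusztigD
  rw [if_neg (by rw [Nat.even_iff]; omega)]
  exact Odd.neg_one_pow (by rw [Nat.odd_iff]; omega)

lemma key_s14 (m : ℕ) (lam : Fin m → ℕ) (hmono : Monotone lam)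
    (heven : ∀ p : ℕ, Even p → Even ((Finset.univ.filter fun i => lam i = p).card)) :
    4 * (∑ i, modVal m lam i) =
      (∑ i, (lam i : ℤ)) - 2 * (∑ i, lusztigD (lam i)) ^ 2 + (∑ i, lusztigD (lam i)) := by
  induction m using Nat.strong_induction_on with
  | _ m IH =>
  match m with
  | 0 => simp
  | k + 1 =>
    set lam' : Fin k → ℕ := fun j => lam j.castSucc with hlam'def
    have hmono' : Monotone lam' := fun a b h => hmono (Fin.castSucc_le_castSucc_iff.mpr h)
    have hS : (∑ i, modVal (k + 1) lam i) =
        (∑ i, modVal k lam' i) + modVal (k + 1) lam (Fin.last k) := by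
      rw [Fin.sum_univ_castSucc]
      congr 1
      exact Finset.sum_congr rfl fun i _ => modVal_castSucc lam i
    have hT : (∑ i : Fin (k + 1), lusztigD (lam i)) =
        (∑ i : Fin k, lusztigD (lam' i)) + lusztigD (lam (Fin.last k)) := by
      rw [Fin.sum_univ_castSucc]
    have hN : (∑ i : Fin (k + 1), (lam i : ℤ)) =
        (∑ i : Fin k, (lam' i : ℤ)) + (lam (Fin.last k) : ℤ) := by
      rw [Fin.sum_univ_castSucc]
    have htlast : tPartial (k + 1) lam (Fin.last k) = ∑ i : Fin k, lusztigD (lam' i) :=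
      tPartial_last lam
    by_cases hpar : lam (Fin.last k) % 2 = 1
    · -- last entry odd: remove one entry
      have hfib : ∀ p : ℕ, Even p →
          Even ((Finset.univ.filter fun i : Fin k => lam' i = p).card) := by
        intro p hp
        have h2 := card_fiber_castSucc lam p
        rw [if_neg (by rw [Nat.even_iff] at hp; omega)] at h2
        simpa [h2] using heven p hp
      have hIH := IH k (Nat.lt_succ_self k) lam' hmono' hfib
      rcases (by omega : lam (Fin.last k) % 4 = 1 ∨ lam (Fin.last k) % 4 = 3) with h4 | h4
      · have hD := lusztigD_one h4
        have hlastv : 4 * modVal (k + 1) lam (Fin.last k) =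
            (lam (Fin.last k) : ℤ) - 1 - 4 * (∑ i : Fin k, lusztigD (lam' i)) := by
          unfold modVal
          rw [htlast, if_pos h4]
          omega
        rw [hS, hT, hN, hD]
        linear_combination hIH + hlastv
      · have hD := lusztigD_three h4
        have hlastv : 4 * modVal (k + 1) lam (Fin.last k) =
            (lam (Fin.last k) : ℤ) - 3 + 4 * (∑ i : Fin k, lusztigD (lam' i)) := by
          unfold modVal
          rw [htlast, if_neg (by omega), if_pos h4]
          omega
        rw [hS, hT, hN, hD]
        linear_combination hIH + hlastv
    · -- last entry even: remove two entries
      have he2 : lam (Fin.last k) % 2 = 0 := by omega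
      have hevcard := heven (lam (Fin.last k)) (Nat.even_iff.mpr he2)
      have hmem : Fin.last k ∈ Finset.univ.filter
          (fun i : Fin (k + 1) => lam i = lam (Fin.last k)) := by simp
      have hcard2 : 1 < (Finset.univ.filter
          (fun i : Fin (k + 1) => lam i = lam (Fin.last k))).card := by
        rcases hevcard with ⟨c, hc⟩
        have hpos : 0 < (Finset.univ.filter
            (fun i : Fin (k + 1) => lam i = lam (Fin.last k))).card :=
          Finset.card_pos.mpr ⟨Fin.last k, hmem⟩
        omega
      obtain ⟨i0, hi0mem, hi0ne⟩ := Finset.exists_mem_ne hcard2 (Fin.last k)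
      have hi0val : (i0 : ℕ) < k := by
        have h1 : (i0 : ℕ) < k + 1 := i0.isLt
        have h2 : (i0 : ℕ) ≠ k := fun h => hi0ne (Fin.ext (by simp [h]))
        omega
      have hk0 : 0 < k := by omega
      obtain ⟨k', rfl⟩ : ∃ k', k = k' + 1 := ⟨k - 1, by omega⟩
      -- the second-to-last entry equals the last entry
      have hsecond : lam' (Fin.last k') = lam (Fin.last (k' + 1)) := by
        have h1 : lam i0 = lam (Fin.last (k' + 1)) := (Finset.mem_filter.mp hi0mem).2
        have h2 : lam i0 ≤ lam ((Fin.last k').castSucc) :=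
          hmono (by rw [Fin.le_def, Fin.coe_castSucc, Fin.val_last]; omega)
        have h3 : lam ((Fin.last k').castSucc) ≤ lam (Fin.last (k' + 1)) :=
          hmono (by rw [Fin.le_def, Fin.coe_castSucc, Fin.val_last, Fin.val_last]; omega)
        show lam ((Fin.last k').castSucc) = lam (Fin.last (k' + 1))
        omega
      set lam'' : Fin k' → ℕ := fun j => lam' j.castSucc with hlam''def
      have hmono'' : Monotone lam'' := fun a b h => hmono' (Fin.castSucc_le_castSucc_iff.mpr h)
      -- fiber condition for lam''
      have hfib : ∀ p : ℕ, Even p →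
          Even ((Finset.univ.filter fun i : Fin k' => lam'' i = p).card) := by
        intro p hp
        have hA : (Finset.univ.filter fun i : Fin (k' + 2) => lam i = p).card =
            (Finset.univ.filter fun i : Fin (k' + 1) => lam' i = p).card +
              (if lam (Fin.last (k' + 1)) = p then 1 else 0) := card_fiber_castSucc lam p
        have hB : (Finset.univ.filter fun i : Fin (k' + 1) => lam' i = p).card =
            (Finset.univ.filter fun i : Fin k' => lam'' i = p).card +
              (if lam' (Fin.last k') = p then 1 else 0) := card_fiber_castSucc lam' p
        have h := heven p hp
        rw [hA, hB] at h
        by_cases hpe : lam (Fin.last (k' + 1)) = p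
        · rw [if_pos hpe, if_pos (by rw [hsecond]; exact hpe)] at h
          rw [Nat.even_iff] at h ⊢
          omega
        · rw [if_neg hpe, if_neg (by rw [hsecond]; exact hpe)] at h
          simpa using h
      have hIH := IH k' (by omega) lam'' hmono'' hfib
      -- decompose the lam' sums one more step
      have hS' : (∑ i, modVal (k' + 1) lam' i) =
          (∑ i, modVal k' lam'' i) + modVal (k' + 1) lam' (Fin.last k') := by
        rw [Fin.sum_univ_castSucc]
        congr 1
        exact Finset.sum_congr rfl fun i _ => modVal_castSucc lam' i
      have hT' : (∑ i : Fin (k' + 1), lusztigD (lam' i)) =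
          (∑ i : Fin k', lusztigD (lam'' i)) + lusztigD (lam' (Fin.last k')) := by
        rw [Fin.sum_univ_castSucc]
      have hN' : (∑ i : Fin (k' + 1), (lam' i : ℤ)) =
          (∑ i : Fin k', (lam'' i : ℤ)) + (lam' (Fin.last k') : ℤ) := by
        rw [Fin.sum_univ_castSucc]
      have hD0 : lusztigD (lam (Fin.last (k' + 1))) = 0 := lusztigD_even he2
      have hD0' : lusztigD (lam' (Fin.last k')) = 0 := by rw [hsecond]; exact hD0
      -- tPartial values
      have htlast' : tPartial (k' + 1) lam' (Fin.last k') =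
          ∑ i : Fin k', lusztigD (lam'' i) := tPartial_last lam'
      have htlast2 : tPartial (k' + 2) lam (Fin.last (k' + 1)) =
          ∑ i : Fin k', lusztigD (lam'' i) := by
        rw [htlast, hT', hD0']; ring
      -- offsets
      have hoffB : offsetIn (k' + 1) lam' (Fin.last k') =
          (Finset.univ.filter fun j : Fin k' => lam'' j = lam' (Fin.last k')).card :=
        offsetIn_last lam'
      have hoffA : offsetIn (k' + 2) lam (Fin.last (k' + 1)) =
          (Finset.univ.filter fun j : Fin k' => lam'' j = lam' (Fin.last k')).card + 1 := by
        rw [offsetIn_last lam]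
        have h := card_fiber_castSucc lam' (lam (Fin.last (k' + 1)))
        rw [if_pos hsecond] at h
        rw [show (Finset.univ.filter fun j : Fin (k' + 1) =>
            lam j.castSucc = lam (Fin.last (k' + 1))) =
            (Finset.univ.filter fun j : Fin (k' + 1) =>
            lam' j = lam (Fin.last (k' + 1))) from rfl, h, hsecond]
      -- the pair of modified entries
      have hpair : 4 * (modVal (k' + 1) lam' (Fin.last k') +
          modVal (k' + 2) lam (Fin.last (k' + 1))) = 2 * (lam (Fin.last (k' + 1)) : ℤ) := by
        have hmod : lam' (Fin.last k') = lam (Fin.last (k' + 1)) := hsecond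
        unfold modVal
        rw [htlast', htlast2, hoffA, hoffB, hmod]
        simp only [Nat.even_iff]
        split_ifs <;> omega
      rw [hS, hS', hT, hT', hN, hN', hD0, hD0', hsecond]
      linear_combination hIH + hpair

/-- Lemma 14.4: for `λ ∈ X_n`, the sum of all modified entries equals
`(n - 2t² + t)/4` where `t = Σᵢ d(λᵢ)`. -/
theorem stmt14 (m n : ℕ) (lam : Fin m → ℕ) (hmono : Monotone lam)
    (hpos : ∀ i, 0 < lam i) (hsum : ∑ i, lam i = n)
    (heven : ∀ p : ℕ, Even p → Even ((Finset.univ.filter fun i => lam i = p).card))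
    (hodd : ∀ p : ℕ, Odd p → (Finset.univ.filter fun i => lam i = p).card ≤ 1) :
    ((∑ i, modVal m lam i : ℤ) : ℚ) =
      ((n : ℚ) - 2 * ((∑ i, lusztigD (lam i) : ℤ) : ℚ) ^ 2
          + ((∑ i, lusztigD (lam i) : ℤ) : ℚ)) / 4 := by
  have hk := key_s14 m lam hmono heven
  have hn : (∑ i, (lam i : ℤ)) = (n : ℤ) := by rw [← hsum]; push_cast; rfl
  rw [hn] at hk
  have h2 : ((4 * ∑ i, modVal m lam i : ℤ) : ℚ) =
      (((n : ℤ) - 2 * (∑ i, lusztigD (lam i)) ^ 2 + (∑ i, lusztigD (lam i)) : ℤ) : ℚ) := by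
    exact_mod_cast congrArg (fun z : ℤ => (z : ℚ)) hk
  push_cast at h2 ⊢
  linarith
end

section
/- Let (λ, δ) ∈ V_{2n}: λ₁ ≤ λ₂ ≤ ... ≤ λ_{2k+1} are natural numbers summing to 2n, δ is a partition of {1,...,2k+1} into singleton blocks and blocks of two consecutive integers, such that: if {i} is a block then λ_i is even; if {i,i+1} is a block then λ_i = λ_{i+1}; if {i} and {j,j+1} are blocks then λ_i ≠ λ_j; and at most one λ_i equals 0. Define c_i = λ_i/2 + 2(i-1) if {i} is a block; c_i = (λ_i+1)/2 + 2(i-1) and c_{i+1} = (λ_{i+1}-1)/2 + 2i if {i,i+1} is a block with λ_i odd; c_i = (λ_i+2)/2 + 2(i-1) and c_{i+1} = (λ_{i+1}-2)/2 + 2i if {i,i+1} is a block with λ_i even. Then c₁ ≤ c₂ ≤ ... ≤ c_{2k+1}, and all c_i are natural numbers. -/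
/-- Lusztig 13.3: for `(λ, δ) ∈ V_{2n}` (encoded via an involution `mate` pairing each
index with its block partner, itself for singleton blocks), the sequence `c` defined
by `cᵢ = λᵢ/2 + 2(i-1)` on singleton blocks, by `cᵢ = (λᵢ+1)/2 + 2(i-1)`,
`cᵢ₊₁ = (λᵢ₊₁-1)/2 + 2i` on two-element blocks with odd entries, and by
`cᵢ = (λᵢ+2)/2 + 2(i-1)`, `cᵢ₊₁ = (λᵢ₊₁-2)/2 + 2i` on two-element blocks with even
entries, is nondecreasing and consists of natural numbers (indices here 0-based). -/
theorem stmt15 (k n : ℕ) (lam : Fin (2 * k + 1) → ℕ)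
    (mate : Fin (2 * k + 1) → Fin (2 * k + 1))
    (hmono : Monotone lam) (hsum : ∑ i, lam i = 2 * n)
    (hinv : ∀ i, mate (mate i) = i)
    (hconsec : ∀ i, (mate i : ℕ) = (i : ℕ) ∨ (mate i : ℕ) = (i : ℕ) + 1 ∨
      (mate i : ℕ) + 1 = (i : ℕ))
    (hpair : ∀ i, lam (mate i) = lam i)
    (hsingle : ∀ i, mate i = i → Even (lam i))
    (hdistinct : ∀ i j, mate i = i → mate j ≠ j → lam i ≠ lam j)
    (hzero : ∀ i j, lam i = 0 → lam j = 0 → i = j) :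
    letI c : Fin (2 * k + 1) → ℤ := fun i =>
      if mate i = i then (lam i : ℤ) / 2 + 2 * ((i : ℕ) : ℤ)
      else if (i : ℕ) < (mate i : ℕ) then
        (if Odd (lam i) then ((lam i : ℤ) + 1) / 2 + 2 * ((i : ℕ) : ℤ)
         else ((lam i : ℤ) + 2) / 2 + 2 * ((i : ℕ) : ℤ))
      else
        (if Odd (lam i) then ((lam i : ℤ) - 1) / 2 + 2 * ((i : ℕ) : ℤ)
         else ((lam i : ℤ) - 2) / 2 + 2 * ((i : ℕ) : ℤ))
    Monotone c ∧ ∀ i, 0 ≤ c i := by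
  set c : Fin (2 * k + 1) → ℤ := fun i =>
      if mate i = i then (lam i : ℤ) / 2 + 2 * ((i : ℕ) : ℤ)
      else if (i : ℕ) < (mate i : ℕ) then
        (if Odd (lam i) then ((lam i : ℤ) + 1) / 2 + 2 * ((i : ℕ) : ℤ)
         else ((lam i : ℤ) + 2) / 2 + 2 * ((i : ℕ) : ℤ))
      else
        (if Odd (lam i) then ((lam i : ℤ) - 1) / 2 + 2 * ((i : ℕ) : ℤ)
         else ((lam i : ℤ) - 2) / 2 + 2 * ((i : ℕ) : ℤ)) with hc
  have hmon : Monotone c := by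
    rw [Fin.monotone_iff_le_succ]
    intro i
    have hab : (lam i.castSucc : ℤ) ≤ (lam i.succ : ℤ) := by
      exact_mod_cast hmono (Fin.castSucc_le_succ i)
    have hQP : ((i.succ : ℕ) : ℤ) = ((i.castSucc : ℕ) : ℤ) + 1 := by
      simp [Fin.val_succ, Fin.coe_castSucc]
    simp only [hc]
    split_ifs <;> omega
  refine ⟨hmon, fun i => ?_⟩
  have h0 : c 0 ≤ c i := hmon (Fin.zero_le i)
  have h00 : (0 : ℤ) ≤ c 0 := by
    simp only [hc]
    split_ifs with h1 h2 h3 h4 h5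
    · positivity
    · positivity
    · positivity
    · exact absurd (Fin.ext (by simpa using Nat.le_zero.mp (Nat.not_lt.mp h2))) h1
    · exact absurd (Fin.ext (by simpa using Nat.le_zero.mp (Nat.not_lt.mp h2))) h1
  linarith
end
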